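/- Let q ≥ 2 and d ≥ 1, and define b_d(n) = Σ_{l≥0} ε_l(n)·ε_{l+1}(n)···ε_{l+d}(n) with base-q digits ε_l(n). Then b_d is (d+1)-recursive: for all n ≥ 1 and all (x_d,...,x_0) ∈ {0,...,q-1}^{d+1}, b_d(q^{d+1} n + Σ_{j=0}^{d} x_j q^j) = b_d(q^d n + Σ_{j=1}^{d} x_j q^{j-1}) + x_d·x_{d-1}···x_0. -/

import Mathlib

/-!
Write `N = q ^ (d + 1) * n + ∑ x_j q ^ j` and `M = q ^ d * n + ∑ x_(j+1) q ^ j`, so that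
`N = q * M + x_0`: the base-`q` digits of `N` are those of `M` shifted up by one, with `x_0` in
front. Hence the window of `d + 1` digits of `N` starting at `l + 1` is the window of `M`
starting at `l`, while the window of `N` starting at `0` is `x_0, …, x_d`. The windows of `m`
starting at `l ≥ m` vanish because `m < q ^ l`, so both sums defining `b` are finite sums over
the same windows, and `b N = b M + x_0 ⋯ x_d`.
-/

/-- The `l`-th digit of `n` in base `q`. -/
def digit (q l n : ℕ) : ℕ := n / q ^ l % q

lemma digit_eq_zero_of_lt_pow {q l n : ℕ} (h : n < q ^ l) : digit q l n = 0 := by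
  rw [digit, Nat.div_eq_of_lt h, Nat.zero_mod]

lemma digit_zero_mul_add {q a r : ℕ} (hr : r < q) : digit q 0 (q * a + r) = r := by
  rw [digit, pow_zero, Nat.div_one, Nat.mul_add_mod, Nat.mod_eq_of_lt hr]

lemma digit_succ_mul_add {q l a r : ℕ} (hr : r < q) :
    digit q (l + 1) (q * a + r) = digit q l a := by
  have hq : 0 < q := by omega
  rw [digit, digit, pow_succ', ← Nat.div_div_eq_div_mul, Nat.mul_add_div hq,
    Nat.div_eq_of_lt hr, add_zero]

lemma pow_succ_mul_add_sum_fin (q k n : ℕ) (x : Fin (k + 1) → ℕ) :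
    q ^ (k + 1) * n + ∑ j : Fin (k + 1), x j * q ^ (j : ℕ) =
      q * (q ^ k * n + ∑ j : Fin k, x j.succ * q ^ (j : ℕ)) + x 0 := by
  simp only [Fin.sum_univ_succ, Fin.val_zero, pow_zero, mul_one, Fin.val_succ, pow_succ,
    mul_add, Finset.mul_sum]
  ring_nf

lemma digit_pow_mul_add_sum_fin {q : ℕ} :
    ∀ {k : ℕ} (n : ℕ) (x : Fin k → ℕ), (∀ j, x j < q) → ∀ t : Fin k,
      digit q t (q ^ k * n + ∑ j : Fin k, x j * q ^ (j : ℕ)) = x t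
  | 0, _, _, _, t => t.elim0
  | k + 1, n, x, hx, t => by
    rw [pow_succ_mul_add_sum_fin]
    cases t using Fin.cases with
    | zero => exact digit_zero_mul_add (hx 0)
    | succ s =>
      rw [Fin.val_succ, digit_succ_mul_add (hx 0)]
      exact digit_pow_mul_add_sum_fin n (fun j => x j.succ) (fun j => hx j.succ) s

def digitWindow (q d m l : ℕ) : ℕ := ∏ t ∈ Finset.range (d + 1), digit q (l + t) m

lemma digitWindow_mul_add_succ {q d a r : ℕ} (hr : r < q) (l : ℕ) :
    digitWindow q d (q * a + r) (l + 1) = digitWindow q d a l := by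
  simp only [digitWindow, add_right_comm l 1, digit_succ_mul_add hr]

lemma digitWindow_eq_zero_of_le {q d m l : ℕ} (hq : 2 ≤ q) (h : m ≤ l) :
    digitWindow q d m l = 0 := by
  refine Finset.prod_eq_zero (Finset.mem_range.2 d.succ_pos) (digit_eq_zero_of_lt_pow ?_)
  calc m ≤ l := h
    _ < 2 ^ l := Nat.lt_two_pow_self
    _ ≤ q ^ (l + 0) := Nat.pow_le_pow_left hq l

lemma sum_range_digitWindow_of_le {q d m K : ℕ} (hq : 2 ≤ q) (h : m ≤ K) :
    ∑ l ∈ Finset.range K, digitWindow q d m l = ∑ l ∈ Finset.range m, digitWindow q d m l :=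
  (Finset.sum_subset (Finset.range_subset_range.2 h) fun _ _ hl =>
    digitWindow_eq_zero_of_le hq (not_lt.1 (Finset.mem_range.not.1 hl))).symm

theorem stmt_17_general (q d : ℕ) (hq : 2 ≤ q)
    (b : ℕ → ℕ)
    (hb : ∀ m, b m = ∑ l ∈ Finset.range (m + 1),
        ∏ t ∈ Finset.range (d + 1), digit q (l + t) m) :
    ∀ n : ℕ, 1 ≤ n → ∀ x : Fin (d + 1) → ℕ, (∀ j, x j < q) →
      b (q ^ (d + 1) * n + ∑ j : Fin (d + 1), x j * q ^ (j : ℕ)) =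
        b (q ^ d * n + ∑ j : Fin d, x j.succ * q ^ (j : ℕ)) + ∏ j : Fin (d + 1), x j := by
  intro n _ x hx
  have hbw : ∀ m, b m = ∑ l ∈ Finset.range (m + 1), digitWindow q d m l := hb
  have hN := pow_succ_mul_add_sum_fin q d n x
  set M := q ^ d * n + ∑ j : Fin d, x j.succ * q ^ (j : ℕ)
  have hMN : M ≤ q * M + x 0 := by nlinarith
  have hwindow0 : digitWindow q d (q ^ (d + 1) * n + ∑ j : Fin (d + 1), x j * q ^ (j : ℕ)) 0 =
      ∏ j : Fin (d + 1), x j := by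
    rw [digitWindow, ← Fin.prod_univ_eq_prod_range]
    exact Finset.prod_congr rfl fun t _ => by rw [zero_add, digit_pow_mul_add_sum_fin n x hx]
  rw [hbw M, sum_range_digitWindow_of_le hq M.le_succ, hbw, Finset.sum_range_succ', hwindow0, hN]
  simp only [digitWindow_mul_add_succ (hx 0)]
  rw [sum_range_digitWindow_of_le hq hMN]

theorem stmt_17 (q d : ℕ) (hq : 2 ≤ q) (hd : 1 ≤ d)
    (b : ℕ → ℕ)
    (hb : ∀ m, b m = ∑ l ∈ Finset.range (m + 1),
        ∏ t ∈ Finset.range (d + 1), digit q (l + t) m) :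
    ∀ n : ℕ, 1 ≤ n → ∀ x : Fin (d + 1) → ℕ, (∀ j, x j < q) →
      b (q ^ (d + 1) * n + ∑ j : Fin (d + 1), x j * q ^ (j : ℕ)) =
        b (q ^ d * n + ∑ j : Fin d, x j.succ * q ^ (j : ℕ)) + ∏ j : Fin (d + 1), x j :=
  stmt_17_general q d hq b hb
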